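/- In the Kelly poset K_n (n ≥ 3): a_i < b_j if and only if i ≠ j; moreover the elements a_1, …, a_n are pairwise incomparable and the elements b_1, …, b_n are pairwise incomparable. Consequently, the subposet of K_n induced on {a_1,…,a_n} ∪ {b_1,…,b_n} is isomorphic to the standard example S_n. -/

import Mathlib

/-- The elements of the standard example `S_n`: minimal elements `a i`, maximal elements `b i`. -/
inductive SElt (n : ℕ) : Type
  | a : Fin n → SElt n
  | b : Fin n → SElt n

/-- The order of the standard example: `a i < b j` iff `i ≠ j`, nothing else. -/
instance (n : ℕ) : PartialOrder (SElt n) where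
  le x y := x = y ∨ ∃ i j : Fin n, x = .a i ∧ y = .b j ∧ i ≠ j
  le_refl x := Or.inl rfl
  le_trans := by
    rintro x y z (rfl | ⟨i, j, rfl, rfl, hij⟩) hyz
    · exact hyz
    · rcases hyz with rfl | ⟨i', j', h1, h2, h3⟩
      · exact Or.inr ⟨i, j, rfl, rfl, hij⟩
      · exact absurd h1 (by simp)
  le_antisymm := by
    rintro x y (rfl | ⟨i, j, rfl, rfl, hij⟩) hyx
    · rfl
    · rcases hyx with h | ⟨i', j', h1, h2, h3⟩
      · exact h.symm
      · exact absurd h1 (by simp)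


/-- The elements of the Kelly poset `K n`:
`a 1, …, a n`, `b 1, …, b n`, `w 1, …, w (n-1)`, `z 1, …, z (n-1)`. -/
inductive KElt (n : ℕ) : Type
  | a : Fin n → KElt n
  | b : Fin n → KElt n
  | w : Fin (n - 1) → KElt n
  | z : Fin (n - 1) → KElt n

namespace KElt

/-- Inclusion `Fin (n-1) → Fin n` keeping the value. -/
def lo {n : ℕ} (i : Fin (n - 1)) : Fin n := ⟨i.val, by have := i.isLt; omega⟩

/-- The map `Fin (n-1) → Fin n` sending `i` to `i + 1`. -/
def hi {n : ℕ} (i : Fin (n - 1)) : Fin n := ⟨i.val + 1, by have := i.isLt; omega⟩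

/-- The defining relations (cover relations) of the Kelly poset, with indices written
0-based: `aᵢ < wᵢ`, `wᵢ < bᵢ₊₁`, `wᵢ < wᵢ₊₁`, `aᵢ₊₁ < zᵢ`, `zᵢ < bᵢ`, `zᵢ₊₁ < zᵢ`. -/
inductive kcov {n : ℕ} : KElt n → KElt n → Prop
  | aw (i : Fin (n - 1)) : kcov (.a (lo i)) (.w i)
  | wb (i : Fin (n - 1)) : kcov (.w i) (.b (hi i))
  | ww (i j : Fin (n - 1)) : j.val = i.val + 1 → kcov (.w i) (.w j)
  | az (i : Fin (n - 1)) : kcov (.a (hi i)) (.z i)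
  | zb (i : Fin (n - 1)) : kcov (.z i) (.b (lo i))
  | zz (i j : Fin (n - 1)) : j.val = i.val + 1 → kcov (.z j) (.z i)

/-- A measure that strictly increases along the defining relations. -/
def kmeas {n : ℕ} : KElt n → ℕ
  | .a _ => 0
  | .w i => i.val + 1
  | .z i => n - i.val
  | .b _ => n + 1

theorem kcov_meas {n : ℕ} {x y : KElt n} (h : kcov x y) : kmeas x < kmeas y := by
  cases h with
  | aw i => simp [kmeas]
  | wb i => have := i.isLt; simp [kmeas]; omega
  | ww i j h => have := i.isLt; simp [kmeas]; omega
  | az i => have := i.isLt; simp [kmeas]; omega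
  | zb i => have := i.isLt; simp [kmeas] <;> omega
  | zz i j h => have := i.isLt; have := j.isLt; simp [kmeas]; omega

theorem rtg_meas {n : ℕ} {x y : KElt n} (h : Relation.ReflTransGen kcov x y) :
    kmeas x ≤ kmeas y := by
  induction h with
  | refl => exact le_rfl
  | tail _ hc ih => exact le_trans ih (le_of_lt (kcov_meas hc))

/-- The Kelly poset: reflexive–transitive closure of the defining relations. -/
instance (n : ℕ) : PartialOrder (KElt n) where
  le := Relation.ReflTransGen kcov
  le_refl _ := Relation.ReflTransGen.refl
  le_trans _ _ _ := Relation.ReflTransGen.trans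
  le_antisymm := by
    intro x y hxy hyx
    rcases Relation.ReflTransGen.cases_head hxy with rfl | ⟨c, hc, hcy⟩
    · rfl
    · exfalso
      have h1 : kmeas x < kmeas c := kcov_meas hc
      have h2 : kmeas c ≤ kmeas y := rtg_meas hcy
      have h3 : kmeas y ≤ kmeas x := rtg_meas hyx
      omega

end KElt

/-!
The up-set of `a i` is `{a i} ∪ {w k | i ≤ k} ∪ {z k | k < i} ∪ {b j | j ≠ i}` (0-based
indices): this set is closed under the generating relations, and each of its elements is
reached from `a i` along the chain `w i < w (i+1) < ⋯` or the chain `z (i-1) > z (i-2) > ⋯`.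
The `b`'s are maximal because no generating relation leaves them.
-/

namespace KElt

variable {n : ℕ}

theorem hi_pred (j : Fin n) (hj : 0 < j.val) : hi (⟨j.val - 1, by omega⟩ : Fin (n - 1)) = j :=
  Fin.ext (Nat.sub_add_cancel hj)

theorem w_mono : Monotone (w : Fin (n - 1) → KElt n) := by
  rintro k ⟨l, hl⟩ (h : k.val ≤ l)
  revert hl
  induction l, h using Nat.le_induction with
  | base => exact fun _ => le_rfl
  | succ l _ ih =>
    exact fun hl => (ih (by omega)).trans (.single (kcov.ww ⟨l, by omega⟩ _ rfl))

theorem z_anti : Antitone (z : Fin (n - 1) → KElt n) := by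
  rintro k ⟨l, hl⟩ (h : k.val ≤ l)
  revert hl
  induction l, h using Nat.le_induction with
  | base => exact fun _ => le_rfl
  | succ l _ ih =>
    exact fun hl => (Relation.ReflTransGen.single (kcov.zz ⟨l, by omega⟩ _ rfl)).trans (ih _)

theorem a_le_w {i : Fin n} {k : Fin (n - 1)} (h : i.val ≤ k.val) : a i ≤ w k :=
  (Relation.ReflTransGen.single (kcov.aw ⟨i, by omega⟩)).trans (w_mono h)

theorem a_le_z {i : Fin n} {k : Fin (n - 1)} (h : k.val < i.val) : a i ≤ z k :=
  hi_pred i (by omega) ▸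
    (Relation.ReflTransGen.single (kcov.az _)).trans (z_anti (show k.val ≤ i.val - 1 by omega))

theorem a_le_b {i j : Fin n} (h : i ≠ j) : a i ≤ b j := by
  rcases Fin.lt_or_lt_of_ne h with hij | hji
  · exact hi_pred j (by omega) ▸
      (a_le_w (show i.val ≤ j.val - 1 by omega)).trans (.single (kcov.wb _))
  · exact (a_le_z (k := ⟨j, by omega⟩) hji).trans (.single (kcov.zb _))

def AboveA (i : Fin n) : KElt n → Prop
  | .a j => j = i
  | .w k => i.val ≤ k.val
  | .z k => k.val < i.val
  | .b j => j ≠ i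

theorem AboveA.of_kcov {i : Fin n} {x y : KElt n} (h : kcov x y) (hx : AboveA i x) :
    AboveA i y := by
  cases h <;> simp only [AboveA, lo, hi, Ne, Fin.ext_iff] at hx ⊢ <;> omega

theorem a_le_iff {i : Fin n} {x : KElt n} : a i ≤ x ↔ AboveA i x := by
  constructor
  · intro h
    induction h with
    | refl => rfl
    | tail _ hc ih => exact ih.of_kcov hc
  · cases x with
    | a j => rintro rfl; rfl
    | b j => exact fun h => a_le_b (Ne.symm h)
    | w k => exact a_le_w
    | z k => exact a_le_z

theorem b_le_iff {i : Fin n} {x : KElt n} : b i ≤ x ↔ x = b i := by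
  refine ⟨fun h => ?_, fun h => h ▸ le_rfl⟩
  rcases Relation.ReflTransGen.cases_head h with rfl | ⟨c, hc, -⟩
  · rfl
  · cases hc

theorem a_le_a_iff {i j : Fin n} : a i ≤ a j ↔ i = j := by
  simp [a_le_iff, AboveA, eq_comm]

theorem a_le_b_iff {i j : Fin n} : a i ≤ b j ↔ i ≠ j := by
  simp [a_le_iff, AboveA, eq_comm]

theorem a_lt_b_iff {i j : Fin n} : a i < b j ↔ i ≠ j := by
  simp [lt_iff_le_and_ne, a_le_b_iff]

theorem b_le_b_iff {i j : Fin n} : b i ≤ b j ↔ i = j := by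
  simp [b_le_iff, eq_comm]

theorem not_b_le_a {i j : Fin n} : ¬ b i ≤ a j := by
  simp [b_le_iff]

end KElt

namespace SElt

variable {n : ℕ}

theorem le_iff {x y : SElt n} :
    x ≤ y ↔ x = y ∨ ∃ i j : Fin n, x = .a i ∧ y = .b j ∧ i ≠ j :=
  Iff.rfl

def toKElt : SElt n → KElt n
  | .a i => .a i
  | .b i => .b i

theorem toKElt_le_toKElt_iff {x y : SElt n} : toKElt x ≤ toKElt y ↔ x ≤ y := by
  cases x <;> cases y <;>
    simp [toKElt, le_iff, KElt.a_le_a_iff, KElt.a_le_b_iff, KElt.b_le_b_iff, KElt.not_b_le_a]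

def kellyEmbedding : SElt n ↪o KElt n :=
  OrderEmbedding.ofMapLEIff toKElt fun _ _ => toKElt_le_toKElt_iff

end SElt

theorem kelly_contains_standard_example_general (n : ℕ) :
    (∀ i j : Fin n, (KElt.a i < KElt.b j) ↔ i ≠ j) ∧
    (∀ i j : Fin n, i ≠ j → ¬ (KElt.a i ≤ KElt.a j)) ∧
    (∀ i j : Fin n, i ≠ j → ¬ (KElt.b i ≤ KElt.b j)) ∧
    ∃ f : SElt n → KElt n, Function.Injective f ∧
      (∀ i, f (.a i) = KElt.a i) ∧ (∀ i, f (.b i) = KElt.b i) ∧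
      ∀ x y : SElt n, x ≤ y ↔ f x ≤ f y :=
  ⟨fun _ _ => KElt.a_lt_b_iff, fun _ _ hij h => hij (KElt.a_le_a_iff.mp h),
    fun _ _ hij h => hij (KElt.b_le_b_iff.mp h),
    SElt.kellyEmbedding, SElt.kellyEmbedding.injective, fun _ => rfl,
    fun _ => rfl, fun _ _ => SElt.kellyEmbedding.le_iff_le.symm⟩

/-- In the Kelly poset: `a i < b j` iff `i ≠ j`, the `a`'s are pairwise incomparable,
the `b`'s are pairwise incomparable; consequently the subposet induced on the `a`'s and
`b`'s is isomorphic to the standard example `S_n`. -/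
theorem kelly_contains_standard_example (n : ℕ) (hn : 3 ≤ n) :
    (∀ i j : Fin n, (KElt.a i < KElt.b j) ↔ i ≠ j) ∧
    (∀ i j : Fin n, i ≠ j → ¬ (KElt.a i ≤ KElt.a j)) ∧
    (∀ i j : Fin n, i ≠ j → ¬ (KElt.b i ≤ KElt.b j)) ∧
    ∃ f : SElt n → KElt n, Function.Injective f ∧
      (∀ i, f (.a i) = KElt.a i) ∧ (∀ i, f (.b i) = KElt.b i) ∧
      ∀ x y : SElt n, x ≤ y ↔ f x ≤ f y :=
  kelly_contains_standard_example_general n
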